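/- Every pair of elements in SO(4) is strongly doubly reversible: for any A, B ∈ SO(4), there exists C ∈ SO(4) with C² = 1 such that C A C⁻¹ = A⁻¹ and C B C⁻¹ = B⁻¹. -/

import Mathlib

/-!
Identify `ℝ⁴` with `ℍ` through the orthonormal basis `1, i, j, k`. By Cartan–Dieudonné every
isometry of `ℍ` is a product of reflections. The reflection in `v^⊥` for a unit `v` is
`x ↦ -v x̄ v = v (τ x) v`, where `τ x = -x̄` is the reflection in `1^⊥`, and `τ` conjugates
`x ↦ p x q̄` into `x ↦ q x p̄`. So every isometry lies in `G` or in `G τ`, where `G` is the image of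
`(p, q) ↦ (x ↦ p x q̄)` on pairs of unit quaternions. Since `det τ = -1`, the rotations are exactly
the elements of `G`.

Given rotations `x ↦ p x q̄` and `x ↦ r x s̄`, take a unit `u` orthogonal to `1, p, r` and a unit
`w` orthogonal to `1, q, s`, which exist because `ℍ` has dimension 4. Being purely imaginary,
`u² = -1`, and `u ⊥ p` means that `u` anticommutes with the imaginary part of `p`, so `u p ū = p̄`
and `u r ū = r̄`. The same holds for `w`, so `x ↦ u x w̄` is an involution that conjugates both
rotations to their inverses.
-/

open Module Quaternion
open scoped RealInnerProductSpace Matrix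

theorem exists_norm_eq_one_forall_inner_eq_zero {𝕜 ι E : Type*} [RCLike 𝕜] [Fintype ι]
    [NormedAddCommGroup E] [InnerProductSpace 𝕜 E] [FiniteDimensional 𝕜 E] (v : ι → E)
    (h : Fintype.card ι < finrank 𝕜 E) : ∃ u : E, ‖u‖ = 1 ∧ ∀ i, inner 𝕜 (v i) u = 0 := by
  set K := Submodule.span 𝕜 (Set.range v)
  have hK : Kᗮ ≠ ⊥ := by
    rw [ne_eq, Submodule.orthogonal_eq_bot_iff]
    intro hK
    have := finrank_range_le_card (R := 𝕜) v
    rw [Set.finrank, show Submodule.span 𝕜 (Set.range v) = ⊤ from hK, finrank_top] at this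
    omega
  obtain ⟨z, hz, hz0⟩ := Submodule.exists_mem_ne_zero_of_ne_bot hK
  refine ⟨(‖z‖⁻¹ : 𝕜) • z, norm_smul_inv_norm hz0, fun i => ?_⟩
  rw [inner_smul_right,
    Submodule.inner_right_of_mem_orthogonal (Submodule.subset_span (Set.mem_range_self i)) hz,
    mul_zero]

theorem MonoidHom.map_inv_matrix {G n R : Type*} [Group G] [Fintype n] [DecidableEq n] [CommRing R]
    (φ : G →* Matrix n n R) (g : G) : φ g⁻¹ = (φ g)⁻¹ :=
  (Matrix.inv_eq_right_inv (by rw [← map_mul, mul_inv_cancel, map_one])).symm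

section toMatrixOrthonormal

variable {ι E : Type*} [Fintype ι] [DecidableEq ι] [NormedAddCommGroup E] [InnerProductSpace ℝ E]
  (b : OrthonormalBasis ι ℝ E)

noncomputable def LinearIsometryEquiv.toMatrixOrthonormal : (E ≃ₗᵢ[ℝ] E) →* Matrix ι ι ℝ where
  toFun f := LinearMap.toMatrix b.toBasis b.toBasis f.toLinearEquiv
  map_one' := LinearMap.toMatrix_one _
  map_mul' _ _ := LinearMap.toMatrix_mul _ _ _

namespace LinearIsometryEquiv

theorem transpose_mul_self_toMatrixOrthonormal (f : E ≃ₗᵢ[ℝ] E) :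
    (f.toMatrixOrthonormal b)ᵀ * f.toMatrixOrthonormal b = 1 := by
  have := Matrix.mem_unitaryGroup_iff'.mp (f.toMatrix_mem_unitaryGroup b b)
  rwa [Matrix.star_eq_conjTranspose, Matrix.conjTranspose_eq_transpose_of_trivial] at this

theorem det_toMatrixOrthonormal (f : E ≃ₗᵢ[ℝ] E) :
    (f.toMatrixOrthonormal b).det = f.toLinearEquiv.det := by
  rw [LinearEquiv.coe_det]
  exact LinearMap.det_toMatrix _ _

theorem exists_toMatrixOrthonormal_eq [FiniteDimensional ℝ E] {A : Matrix ι ι ℝ}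
    (hA : Aᵀ * A = 1) : ∃ f : E ≃ₗᵢ[ℝ] E, f.toMatrixOrthonormal b = A := by
  set φ := Matrix.toLin b.toBasis b.toBasis A
  have hφ : LinearMap.adjoint φ ∘ₗ φ = LinearMap.id := by
    rw [← Matrix.toLin_conjTranspose, ← Matrix.toLin_mul,
      Matrix.conjTranspose_eq_transpose_of_trivial, hA, Matrix.toLin_one]
  have hinner (x y : E) : ⟪φ x, φ y⟫ = ⟪x, y⟫ := by
    rw [← LinearMap.adjoint_inner_right, ← LinearMap.comp_apply, hφ, LinearMap.id_apply]
  exact ⟨(φ.isometryOfInner hinner).toLinearIsometryEquiv rfl, LinearMap.toMatrix_toLin _ _ _⟩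

end LinearIsometryEquiv

end toMatrixOrthonormal

namespace Quaternion

noncomputable def orthonormalBasisOneIJK : OrthonormalBasis (Fin 4) ℝ ℍ :=
  .ofRepr linearIsometryEquivTuple

theorem orthonormalBasisOneIJK_repr_apply (x : ℍ) :
    orthonormalBasisOneIJK.repr x = !₂[x.re, x.imI, x.imJ, x.imK] := rfl

theorem orthonormalBasisOneIJK_apply (j : Fin 4) :
    orthonormalBasisOneIJK j = (equivTuple ℝ).symm (Pi.single j 1) := by
  ext <;> simp [orthonormalBasisOneIJK, Pi.single_apply, eq_comm]

theorem det_mulLeft (p : ℍ) : LinearMap.det (LinearMap.mulLeft ℝ p) = normSq p ^ 2 := by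
  rw [← LinearMap.det_toMatrix orthonormalBasisOneIJK.toBasis, Matrix.det_succ_row_zero]
  simp only [Fin.sum_univ_succ, Matrix.det_fin_three, Matrix.submatrix_apply,
    LinearMap.toMatrix_apply, OrthonormalBasis.coe_toBasis_repr_apply, OrthonormalBasis.coe_toBasis,
    orthonormalBasisOneIJK_repr_apply, orthonormalBasisOneIJK_apply, LinearMap.mulLeft_apply,
    re_mul, imI_mul, imJ_mul, imK_mul]
  simp [Fin.succAbove, normSq_def']
  ring

theorem det_mulRight (p : ℍ) : LinearMap.det (LinearMap.mulRight ℝ p) = normSq p ^ 2 := by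
  rw [← LinearMap.det_toMatrix orthonormalBasisOneIJK.toBasis, Matrix.det_succ_row_zero]
  simp only [Fin.sum_univ_succ, Matrix.det_fin_three, Matrix.submatrix_apply,
    LinearMap.toMatrix_apply, OrthonormalBasis.coe_toBasis_repr_apply, OrthonormalBasis.coe_toBasis,
    orthonormalBasisOneIJK_repr_apply, orthonormalBasisOneIJK_apply, LinearMap.mulRight_apply,
    re_mul, imI_mul, imJ_mul, imK_mul]
  simp [Fin.succAbove, normSq_def']
  ring

theorem normSq_of_mem_unitary {p : ℍ} (hp : p ∈ unitary ℍ) : normSq p = 1 := by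
  rw [normSq_eq_norm_mul_self, CStarRing.norm_of_mem_unitary hp, one_mul]

theorem mem_unitary_of_norm_eq_one {p : ℍ} (hp : ‖p‖ = 1) : p ∈ unitary ℍ := by
  have : ((normSq p : ℝ) : ℍ) = 1 := by simp [normSq_eq_norm_mul_self, hp]
  exact Unitary.mem_iff.mpr
    ⟨(Quaternion.star_mul_self p).trans this, (Quaternion.self_mul_star p).trans this⟩

noncomputable def leftRightMul : unitary ℍ × unitary ℍ →* (ℍ ≃ₗᵢ[ℝ] ℍ) where
  toFun pq :=
    { toFun x := pq.1 * x * star (pq.2 : ℍ)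
      invFun x := star (pq.1 : ℍ) * x * pq.2
      map_add' x y := by noncomm_ring
      map_smul' c x := by simp
      left_inv x := by simp [mul_assoc, ← mul_assoc (star (pq.1 : ℍ))]
      right_inv x := by simp [mul_assoc, ← mul_assoc (pq.1 : ℍ)]
      norm_map' x := by simp [norm_mul, CStarRing.norm_of_mem_unitary] }
  map_one' := LinearIsometryEquiv.ext fun x => by simp
  map_mul' _ _ := LinearIsometryEquiv.ext fun x => by simp [mul_assoc]

@[simp]
theorem leftRightMul_apply (pq : unitary ℍ × unitary ℍ) (x : ℍ) :
    leftRightMul pq x = pq.1 * x * star (pq.2 : ℍ) := rfl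

theorem leftRightMul_neg_one : leftRightMul (-1, -1) = 1 :=
  LinearIsometryEquiv.ext fun x => by simp [Unitary.coe_neg]

theorem det_leftRightMul (pq : unitary ℍ × unitary ℍ) :
    (leftRightMul pq).toLinearEquiv.det = 1 := by
  have : ((leftRightMul pq).toLinearEquiv : ℍ →ₗ[ℝ] ℍ) =
      LinearMap.mulLeft ℝ (pq.1 : ℍ) ∘ₗ LinearMap.mulRight ℝ (star (pq.2 : ℍ)) :=
    LinearMap.ext fun x => mul_assoc ..
  ext
  rw [LinearEquiv.coe_det, this, LinearMap.det_comp, det_mulLeft, det_mulRight, normSq_star,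
    normSq_of_mem_unitary pq.1.2, normSq_of_mem_unitary pq.2.2]
  norm_num

theorem reflection_orthogonal_singleton_apply {v : ℍ} (hv : v ∈ unitary ℍ) (x : ℍ) :
    (ℝ ∙ v)ᗮ.reflection x = -(v * star x * v) := by
  have hsum : v * star x + x * star v = 2 * (⟪v, x⟫ : ℍ) := by
    simpa [star_mul, inner_def] using self_add_star (v * star x)
  rw [Submodule.reflection_orthogonal_apply, Submodule.reflection_singleton_apply,
    CStarRing.norm_of_mem_unitary hv]
  calc -(2 • (⟪v, x⟫ / (1 : ℝ) ^ 2) • v - x) = x - 2 * (⟪v, x⟫ : ℍ) * v := by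
        rw [mul_assoc, coe_mul_eq_smul, two_mul]; module
    _ = -(v * star x * v) := by
      rw [← hsum, add_mul, mul_assoc x, Unitary.star_mul_self_of_mem hv]; noncomm_ring

theorem reflection_eq_leftRightMul_mul (v : unitary ℍ) :
    (ℝ ∙ (v : ℍ))ᗮ.reflection = leftRightMul (v, star v) * (ℝ ∙ (1 : ℍ))ᗮ.reflection :=
  LinearIsometryEquiv.ext fun x => by
    simp [reflection_orthogonal_singleton_apply v.2,
      reflection_orthogonal_singleton_apply (one_mem _), mul_assoc]

theorem reflection_mul_leftRightMul_mul_reflection (pq : unitary ℍ × unitary ℍ) :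
    (ℝ ∙ (1 : ℍ))ᗮ.reflection * leftRightMul pq * (ℝ ∙ (1 : ℍ))ᗮ.reflection =
      leftRightMul pq.swap :=
  LinearIsometryEquiv.ext fun x => by
    simp [reflection_orthogonal_singleton_apply (one_mem _), mul_assoc]

theorem det_reflection_one : (ℝ ∙ (1 : ℍ))ᗮ.reflection.toLinearEquiv.det = -1 := by
  rw [Submodule.linearEquiv_det_reflection, Submodule.orthogonal_orthogonal,
    finrank_span_singleton one_ne_zero, pow_one]

theorem mem_range_leftRightMul_or_mul_reflection_mem (f : ℍ ≃ₗᵢ[ℝ] ℍ) :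
    f ∈ leftRightMul.range ∨ f * (ℝ ∙ (1 : ℍ))ᗮ.reflection ∈ leftRightMul.range := by
  set τ := (ℝ ∙ (1 : ℍ))ᗮ.reflection
  have hτ : τ * τ = 1 := Submodule.reflection_mul_reflection _
  have hconj (h) (hh : h ∈ leftRightMul.range) : τ * h * τ ∈ leftRightMul.range := by
    obtain ⟨pq, rfl⟩ := hh
    exact ⟨pq.swap, (reflection_mul_leftRightMul_mul_reflection pq).symm⟩
  obtain ⟨l, -, rfl⟩ := f.reflections_generate_dim
  induction l with
  | nil => exact .inl (one_mem _)
  | cons v l ih =>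
    rw [List.map_cons, List.prod_cons]
    set φ := (l.map fun v => (ℝ ∙ v)ᗮ.reflection).prod
    rcases eq_or_ne v 0 with rfl | hv
    · have : (ℝ ∙ (0 : ℍ))ᗮ.reflection = 1 :=
        LinearIsometryEquiv.ext fun x => Submodule.reflection_mem_subspace_eq_self (by simp)
      rwa [this, one_mul]
    let u : unitary ℍ := ⟨‖v‖⁻¹ • v, mem_unitary_of_norm_eq_one (norm_smul_inv_norm hv)⟩
    have hspan : ℝ ∙ v = ℝ ∙ (u : ℍ) :=
      (Submodule.span_singleton_smul_eq (inv_ne_zero (norm_ne_zero_iff.mpr hv)).isUnit v).symm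
    simp only [hspan, reflection_eq_leftRightMul_mul]
    rcases ih with h | h
    · refine .inr ?_
      rw [mul_assoc, mul_assoc, ← mul_assoc τ]
      exact mul_mem ⟨_, rfl⟩ (hconj _ h)
    · refine .inl ?_
      rw [mul_assoc, show τ * φ = τ * (φ * τ) * τ by rw [mul_assoc, mul_assoc, hτ, mul_one]]
      exact mul_mem ⟨_, rfl⟩ (hconj _ h)

theorem mem_range_leftRightMul_of_det_eq_one {f : ℍ ≃ₗᵢ[ℝ] ℍ} (hf : f.toLinearEquiv.det = 1) :
    f ∈ leftRightMul.range := by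
  refine (mem_range_leftRightMul_or_mul_reflection_mem f).resolve_right fun ⟨pq, hpq⟩ => ?_
  have hdet : LinearEquiv.det (f * (ℝ ∙ (1 : ℍ))ᗮ.reflection).toLinearEquiv =
      f.toLinearEquiv.det * (ℝ ∙ (1 : ℍ))ᗮ.reflection.toLinearEquiv.det :=
    map_mul LinearEquiv.det _ _
  rw [← hpq, det_leftRightMul, hf, det_reflection_one, one_mul] at hdet
  exact absurd (congrArg Units.val hdet) (by norm_num)

theorem mul_mul_star_eq_star_of_inner_eq_zero {u : ℍ} (hu : u ∈ unitary ℍ) (hre : u.re = 0)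
    {p : ℍ} (hp : ⟪p, u⟫ = 0) : u * p * star u = star p := by
  have hstar : star u = -u := star_eq_neg.mpr hre
  have hanti : p * star u + u * star p = 0 := by
    have := self_add_star (p * star u)
    rwa [star_mul, star_star, ← inner_def, hp, coe_zero, mul_zero] at this
  calc u * p * star u = u * (p * star u) := mul_assoc ..
    _ = u * -(u * star p) := by rw [eq_neg_of_add_eq_zero_left hanti]
    _ = u * star u * star p := by rw [hstar]; noncomm_ring
    _ = star p := by rw [Unitary.mul_star_self_of_mem hu, one_mul]

theorem exists_mul_self_eq_neg_one_conj_eq_inv (p r : unitary ℍ) :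
    ∃ u : unitary ℍ, u * u = -1 ∧ u * p * u⁻¹ = p⁻¹ ∧ u * r * u⁻¹ = r⁻¹ := by
  obtain ⟨u, hu, horth⟩ := exists_norm_eq_one_forall_inner_eq_zero (𝕜 := ℝ) ![1, (p : ℍ), r]
    (by simp [finrank_eq_four])
  have hmem := mem_unitary_of_norm_eq_one hu
  have hre : u.re = 0 := by simpa [inner_def] using horth 0
  have hconj (q : unitary ℍ) (hq : ⟪(q : ℍ), u⟫ = 0) :
      (⟨u, hmem⟩ : unitary ℍ) * q * star ⟨u, hmem⟩ = q⁻¹ :=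
    Subtype.ext (mul_mul_star_eq_star_of_inner_eq_zero hmem hre hq)
  refine ⟨⟨u, hmem⟩, Subtype.ext ?_, ?_, ?_⟩
  · rw [Submonoid.coe_mul, Unitary.coe_neg, OneMemClass.coe_one,
      ← Unitary.mul_star_self_of_mem hmem, star_eq_neg.mpr hre, mul_neg, neg_neg]
  · simpa [Unitary.star_eq_inv] using hconj p (horth 1)
  · simpa [Unitary.star_eq_inv] using hconj r (horth 2)

theorem exists_involution_conj_eq_inv {f g : ℍ ≃ₗᵢ[ℝ] ℍ} (hf : f.toLinearEquiv.det = 1)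
    (hg : g.toLinearEquiv.det = 1) :
    ∃ c : ℍ ≃ₗᵢ[ℝ] ℍ, c.toLinearEquiv.det = 1 ∧ c * c = 1 ∧
      c * f * c⁻¹ = f⁻¹ ∧ c * g * c⁻¹ = g⁻¹ := by
  obtain ⟨⟨p, q⟩, rfl⟩ := mem_range_leftRightMul_of_det_eq_one hf
  obtain ⟨⟨r, s⟩, rfl⟩ := mem_range_leftRightMul_of_det_eq_one hg
  obtain ⟨u, hu, hup, hur⟩ := exists_mul_self_eq_neg_one_conj_eq_inv p r
  obtain ⟨w, hw, hwq, hws⟩ := exists_mul_self_eq_neg_one_conj_eq_inv q s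
  refine ⟨leftRightMul (u, w), det_leftRightMul _, ?_, ?_, ?_⟩
  · rw [← map_mul, Prod.mk_mul_mk, hu, hw, leftRightMul_neg_one]
  · rw [← map_inv, ← map_mul, ← map_mul, ← map_inv]
    exact congrArg leftRightMul (Prod.ext hup hwq)
  · rw [← map_inv, ← map_mul, ← map_mul, ← map_inv]
    exact congrArg leftRightMul (Prod.ext hur hws)

end Quaternion

theorem stmt_11 (A B : Matrix (Fin 4) (Fin 4) ℝ)
    (hA : A.transpose * A = 1) (hAdet : A.det = 1)
    (hB : B.transpose * B = 1) (hBdet : B.det = 1) :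
    ∃ C : Matrix (Fin 4) (Fin 4) ℝ,
      C.transpose * C = 1 ∧ C.det = 1 ∧ C * C = 1 ∧
      C * A * C⁻¹ = A⁻¹ ∧ C * B * C⁻¹ = B⁻¹ := by
  set M := LinearIsometryEquiv.toMatrixOrthonormal orthonormalBasisOneIJK
  obtain ⟨f, rfl⟩ := LinearIsometryEquiv.exists_toMatrixOrthonormal_eq orthonormalBasisOneIJK hA
  obtain ⟨g, rfl⟩ := LinearIsometryEquiv.exists_toMatrixOrthonormal_eq orthonormalBasisOneIJK hB
  rw [LinearIsometryEquiv.det_toMatrixOrthonormal, Units.val_eq_one] at hAdet hBdet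
  obtain ⟨c, hc, hcc, hcf, hcg⟩ := exists_involution_conj_eq_inv hAdet hBdet
  refine ⟨M c, c.transpose_mul_self_toMatrixOrthonormal _,
    by rw [LinearIsometryEquiv.det_toMatrixOrthonormal, hc, Units.val_one],
    by rw [← map_mul, hcc, map_one], ?_, ?_⟩
  · rw [← M.map_inv_matrix, ← map_mul, ← map_mul, hcf, M.map_inv_matrix]
  · rw [← M.map_inv_matrix, ← map_mul, ← map_mul, hcg, M.map_inv_matrix]
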